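/- arXiv:2202.10234 — 4 statements merged into one kernel-verified Lean document; each statement's English description precedes it below -/
import Mathlib

section
/- Let ψ : ℝ → (0,+∞) be an invertible non-increasing function with ψ(t) → +∞ as t → −∞, ψ(0) = 1, and ψ(t) → 0 as t → +∞. Suppose there exist a ∈ (0,1) and s_a > 0 such that ψ(s) ≤ (1/2)ψ(a·s) for all s ≥ s_a. Then for all s, t ∈ ℝ: lim_{r→0⁺} G_r(s,t) = 0 if and only if min(s,t) = 0, where G_r(s,t) = r·ψ⁻¹(ψ(s/r)+ψ(t/r)). -/
open Filter Set

/-- Let ψ : ℝ → (0,+∞) be an invertible non-increasing function with ψ(t)→+∞ as t→−∞,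
ψ(0)=1, ψ(t)→0 as t→+∞, satisfying (H_a) for some a ∈ (0,1). Then for all s, t,
lim_{r→0⁺} G_r(s,t) = 0 iff min(s,t) = 0, where G_r(s,t) = r·ψ⁻¹(ψ(s/r)+ψ(t/r)). -/
theorem stmt_1 (ψ φ : ℝ → ℝ)
    (hpos : ∀ t, 0 < ψ t)
    (hanti : StrictAnti ψ)
    (hleft : ∀ t, φ (ψ t) = t)
    (hright : ∀ y, 0 < y → ψ (φ y) = y)
    (hbot : Tendsto ψ atBot atTop)
    (h0 : ψ 0 = 1)
    (htop : Tendsto ψ atTop (nhds 0))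
    (a : ℝ) (ha : a ∈ Ioo (0:ℝ) 1)
    (Ha : ∃ sa > (0:ℝ), ∀ s ≥ sa, ψ s ≤ ψ (a * s) / 2) :
    ∀ s t : ℝ,
      Tendsto (fun r : ℝ => r * φ (ψ (s / r) + ψ (t / r)))
        (nhdsWithin 0 (Ioi 0)) (nhds 0) ↔ min s t = 0 := by
  obtain ⟨ha0, ha1⟩ := ha
  obtain ⟨sa, hsa, hHa⟩ := Ha
  have hphi_anti : ∀ x y : ℝ, 0 < x → x ≤ y → φ y ≤ φ x := by
    intro x y hx hxy
    by_contra h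
    push_neg at h
    have h2 := hanti h
    rw [hright x hx, hright y (hx.trans_le hxy)] at h2
    linarith
  have hphi1 : φ 1 = 0 := by rw [← h0, hleft]
  intro s t
  constructor
  · intro hT
    by_contra hmin
    rcases lt_or_gt_of_ne hmin with hneg | hposm
    · -- min s t < 0 : f r ≤ min s t for all r > 0
      have hev : ∀ᶠ r in nhdsWithin (0:ℝ) (Ioi 0),
          r * φ (ψ (s / r) + ψ (t / r)) ≤ min s t := by
        filter_upwards [self_mem_nhdsWithin] with r hr
        have hr : (0:ℝ) < r := hr
        have hs' : φ (ψ (s / r) + ψ (t / r)) ≤ s / r := by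
          have := hphi_anti _ _ (hpos (s / r)) (le_add_of_nonneg_right (hpos (t / r)).le)
          rwa [hleft] at this
        have ht' : φ (ψ (s / r) + ψ (t / r)) ≤ t / r := by
          have := hphi_anti _ _ (hpos (t / r)) (le_add_of_nonneg_left (hpos (s / r)).le)
          rwa [hleft] at this
        rcases min_cases s t with ⟨hm, _⟩ | ⟨hm, _⟩
        · rw [hm]
          calc r * φ (ψ (s / r) + ψ (t / r)) ≤ r * (s / r) :=
                mul_le_mul_of_nonneg_left hs' hr.le
            _ = s := by field_simp
        · rw [hm]
          calc r * φ (ψ (s / r) + ψ (t / r)) ≤ r * (t / r) :=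
                mul_le_mul_of_nonneg_left ht' hr.le
            _ = t := by field_simp
      have hev2 : ∀ᶠ r in nhdsWithin (0:ℝ) (Ioi 0),
          min s t < r * φ (ψ (s / r) + ψ (t / r)) :=
        hT (Ioi_mem_nhds hneg)
      obtain ⟨r, h1, h2⟩ := (hev.and hev2).exists
      linarith
    · -- min s t > 0 : f r ≥ a * min s t eventually
      set m := min s t with hm
      have hms : m ≤ s := min_le_left s t
      have hmt : m ≤ t := min_le_right s t
      have hev : ∀ᶠ r in nhdsWithin (0:ℝ) (Ioi 0),
          a * m ≤ r * φ (ψ (s / r) + ψ (t / r)) := by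
        have hsmall : ∀ᶠ r in nhdsWithin (0:ℝ) (Ioi 0), r < m / sa :=
          eventually_nhdsWithin_of_eventually_nhds
            (Filter.Tendsto.eventually_lt_const (by positivity) tendsto_id)
        filter_upwards [self_mem_nhdsWithin, hsmall] with r hr hrsmall
        have hr : (0:ℝ) < r := hr
        have hmsa : sa ≤ m / r := by
          rw [le_div_iff₀ hr]
          calc sa * r = r * sa := mul_comm _ _
            _ ≤ m := by
              have := (lt_div_iff₀ hsa).mp hrsmall
              linarith
        have hHa' := hHa (m / r) hmsa
        have hsum : ψ (s / r) + ψ (t / r) ≤ ψ (a * (m / r)) := by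
          have h1 : ψ (s / r) ≤ ψ (m / r) :=
            hanti.antitone (by gcongr)
          have h2 : ψ (t / r) ≤ ψ (m / r) :=
            hanti.antitone (by gcongr)
          linarith
        have hsumpos : 0 < ψ (s / r) + ψ (t / r) := by
          have := hpos (s / r); have := hpos (t / r); linarith
        have := hphi_anti _ _ hsumpos hsum
        rw [hleft] at this
        calc a * m = r * (a * (m / r)) := by field_simp
          _ ≤ r * φ (ψ (s / r) + ψ (t / r)) := mul_le_mul_of_nonneg_left this hr.le
      have hev2 : ∀ᶠ r in nhdsWithin (0:ℝ) (Ioi 0),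
          r * φ (ψ (s / r) + ψ (t / r)) < a * m :=
        hT (Iio_mem_nhds (by positivity))
      obtain ⟨r, h1, h2⟩ := (hev.and hev2).exists
      linarith
  · intro hmin
    have hs0 : 0 ≤ s := by rw [← hmin]; exact min_le_left s t
    have ht0 : 0 ≤ t := by rw [← hmin]; exact min_le_right s t
    have hor : s = 0 ∨ t = 0 := by
      rcases min_eq_iff.mp hmin with ⟨h, _⟩ | ⟨h, _⟩
      · exact Or.inl h
      · exact Or.inr h
    have key : ∀ r : ℝ, 0 < r →
        r * φ 2 ≤ r * φ (ψ (s / r) + ψ (t / r)) ∧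
        r * φ (ψ (s / r) + ψ (t / r)) ≤ 0 := by
      intro r hr
      have hsle : ψ (s / r) ≤ 1 := by
        rw [← h0]; exact hanti.antitone (by positivity)
      have htle : ψ (t / r) ≤ 1 := by
        rw [← h0]; exact hanti.antitone (by positivity)
      have hsum2 : ψ (s / r) + ψ (t / r) ≤ 2 := by linarith
      have hsum1 : 1 ≤ ψ (s / r) + ψ (t / r) := by
        rcases hor with h | h
        · have : s / r = 0 := by rw [h]; simp
          rw [this, h0]
          have := hpos (t / r); linarith
        · have : t / r = 0 := by rw [h]; simp
          rw [this, h0]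
          have := hpos (s / r); linarith
      have hup : φ (ψ (s / r) + ψ (t / r)) ≤ 0 := by
        have := hphi_anti 1 _ one_pos hsum1
        rwa [hphi1] at this
      have hlo : φ 2 ≤ φ (ψ (s / r) + ψ (t / r)) :=
        hphi_anti _ 2 (by linarith) hsum2
      constructor
      · exact mul_le_mul_of_nonneg_left hlo hr.le
      · exact mul_nonpos_of_nonneg_of_nonpos hr.le hup
    have hlow : Tendsto (fun r : ℝ => r * φ 2) (nhdsWithin (0:ℝ) (Ioi 0)) (nhds 0) := by
      have : Tendsto (fun r : ℝ => r * φ 2) (nhds 0) (nhds (0 * φ 2)) :=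
        (continuous_id.mul continuous_const).tendsto 0
      rw [zero_mul] at this
      exact this.mono_left nhdsWithin_le_nhds
    refine tendsto_of_tendsto_of_tendsto_of_le_of_le' hlow tendsto_const_nhds ?_ ?_
    · filter_upwards [self_mem_nhdsWithin] with r hr
      exact (key r hr).1
    · filter_upwards [self_mem_nhdsWithin] with r hr
      exact (key r hr).2
end

section
/- Let ψ : ℝ → (0,+∞) be an invertible non-increasing function with ψ(t) → +∞ as t → −∞, ψ(0) = 1, and ψ(t) → 0 as t → +∞. Suppose that for every a ∈ (0,1) there exists s_a > 0 such that ψ(s) ≤ (1/2)ψ(a·s) for all s ≥ s_a. Then for all s, t > 0, lim_{r→0⁺} G_r(s,t) = min(s,t), where G_r(s,t) = r·ψ⁻¹(ψ(s/r)+ψ(t/r)). -/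
open Filter Set

/-!
Since ψ is decreasing and positive, `ψ(s/r) + ψ(t/r) ≥ ψ(min s t / r)`, so `G_r(s,t) ≤ min s t`
for every `r > 0`. Conversely, for `a ∈ (0,1)` and `r` small enough, condition (H_a) at
`min s t / r` gives `ψ(s/r) + ψ(t/r) ≤ 2 ψ(min s t / r) ≤ ψ(a · min s t / r)`, so
`G_r(s,t) ≥ a · min s t`. Letting `a → 1` squeezes the limit.
-/

section

variable {ψ φ : ℝ → ℝ} (hanti : StrictAnti ψ) (hright : ∀ y, 0 < y → ψ (φ y) = y)
include hanti hright

theorem le_inv_iff_le_of_strictAnti {u y : ℝ} (hy : 0 < y) : u ≤ φ y ↔ y ≤ ψ u := by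
  rw [← hanti.le_iff_ge, hright y hy]

theorem inv_le_iff_le_of_strictAnti {u y : ℝ} (hy : 0 < y) : φ y ≤ u ↔ ψ u ≤ y := by
  rw [← hanti.le_iff_ge, hright y hy]

variable (hpos : ∀ t, 0 < ψ t)
include hpos

theorem mul_inv_add_le_min {s t r : ℝ} (hr : 0 < r) :
    r * φ (ψ (s / r) + ψ (t / r)) ≤ min s t := by
  have hsum : ψ (min s t / r) ≤ ψ (s / r) + ψ (t / r) := by
    rcases min_choice s t with h | h <;> rw [h] <;> linarith [hpos (s / r), hpos (t / r)]
  have hle : φ (ψ (s / r) + ψ (t / r)) ≤ min s t / r :=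
    (inv_le_iff_le_of_strictAnti hanti hright (by linarith [hpos (s / r), hpos (t / r)])).2 hsum
  calc r * φ (ψ (s / r) + ψ (t / r)) ≤ r * (min s t / r) := by gcongr
    _ = min s t := by field_simp

theorem mul_le_mul_inv_add {a sa m s t r : ℝ} (hsa : ∀ x ≥ sa, ψ x ≤ ψ (a * x) / 2)
    (hms : m ≤ s) (hmt : m ≤ t) (hr : 0 < r) (hmr : sa ≤ m / r) :
    a * m ≤ r * φ (ψ (s / r) + ψ (t / r)) := by
  have hsum : ψ (s / r) + ψ (t / r) ≤ ψ (a * (m / r)) := by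
    have hs : ψ (s / r) ≤ ψ (m / r) := hanti.antitone (by gcongr)
    have ht : ψ (t / r) ≤ ψ (m / r) := hanti.antitone (by gcongr)
    linarith [hsa _ hmr]
  have hle : a * (m / r) ≤ φ (ψ (s / r) + ψ (t / r)) :=
    (le_inv_iff_le_of_strictAnti hanti hright (by linarith [hpos (s / r), hpos (t / r)])).2 hsum
  calc a * m = r * (a * (m / r)) := by field_simp
    _ ≤ r * φ (ψ (s / r) + ψ (t / r)) := by gcongr

end

theorem stmt_2_general (ψ φ : ℝ → ℝ)
    (hpos : ∀ t, 0 < ψ t)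
    (hanti : StrictAnti ψ)
    (hright : ∀ y, 0 < y → ψ (φ y) = y)
    (Ha : ∀ a ∈ Ioo (0:ℝ) 1, ∃ sa > (0:ℝ), ∀ s ≥ sa, ψ s ≤ ψ (a * s) / 2) :
    ∀ s t : ℝ, 0 < s → 0 < t →
      Tendsto (fun r : ℝ => r * φ (ψ (s / r) + ψ (t / r)))
        (nhdsWithin 0 (Ioi 0)) (nhds (min s t)) := by
  intro s t hs ht
  have hm : 0 < min s t := lt_min hs ht
  refine tendsto_order.2 ⟨fun b hb => ?_, fun b hb => ?_⟩
  · obtain ⟨a, hba, ha1⟩ := exists_between (max_lt ((div_lt_one hm).2 hb) zero_lt_one)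
    have ha0 : 0 < a := (le_max_right _ _).trans_lt hba
    have hb : b < a * min s t := (div_lt_iff₀ hm).1 ((le_max_left _ _).trans_lt hba)
    obtain ⟨sa, hsa0, hsa⟩ := Ha a ⟨ha0, ha1⟩
    filter_upwards [Ioo_mem_nhdsGT (div_pos hm hsa0)] with r ⟨hr0, hr⟩
    have hmr : sa ≤ min s t / r := by
      rw [le_div_iff₀ hr0]; rw [lt_div_iff₀ hsa0] at hr; linarith
    exact hb.trans_le
      (mul_le_mul_inv_add hanti hright hpos hsa (min_le_left s t) (min_le_right s t) hr0 hmr)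
  · filter_upwards [eventually_mem_nhdsWithin] with r hr
    exact (mul_inv_add_le_min hanti hright hpos hr).trans_lt hb

/-- If ψ satisfies (H_a) for every a ∈ (0,1), then for all s, t > 0,
lim_{r→0⁺} G_r(s,t) = min(s,t). -/
theorem stmt_2 (ψ φ : ℝ → ℝ)
    (hpos : ∀ t, 0 < ψ t)
    (hanti : StrictAnti ψ)
    (hleft : ∀ t, φ (ψ t) = t)
    (hright : ∀ y, 0 < y → ψ (φ y) = y)
    (hbot : Tendsto ψ atBot atTop)
    (h0 : ψ 0 = 1)
    (htop : Tendsto ψ atTop (nhds 0))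
    (Ha : ∀ a ∈ Ioo (0:ℝ) 1, ∃ sa > (0:ℝ), ∀ s ≥ sa, ψ s ≤ ψ (a * s) / 2) :
    ∀ s t : ℝ, 0 < s → 0 < t →
      Tendsto (fun r : ℝ => r * φ (ψ (s / r) + ψ (t / r)))
        (nhdsWithin 0 (Ioi 0)) (nhds (min s t)) :=
  stmt_2_general ψ φ hpos hanti hright Ha
end

section
/- Let M ∈ ℝ^{n×n} be a P₀-matrix (for every nonzero v ∈ ℝⁿ there exists i with v_i ≠ 0 and v_i·(Mv)_i ≥ 0). Let N_s be a diagonal matrix with strictly positive diagonal entries and N_t a diagonal matrix with nonnegative diagonal entries. Then N_s + N_t·M is nonsingular. -/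
/-- Let M be a P₀-matrix, N_s a diagonal matrix with positive diagonal and N_t a
diagonal matrix with nonnegative diagonal. Then N_s + N_t·M is nonsingular. -/
theorem stmt_11 (n : ℕ) (M : Matrix (Fin n) (Fin n) ℝ)
    (hP0 : ∀ v : Fin n → ℝ, v ≠ 0 → ∃ i, v i ≠ 0 ∧ 0 ≤ v i * M.mulVec v i)
    (s t : Fin n → ℝ) (hs : ∀ i, 0 < s i) (ht : ∀ i, 0 ≤ t i) :
    (Matrix.diagonal s + Matrix.diagonal t * M).det ≠ 0 := by
  intro hdet
  obtain ⟨v, hv, hker⟩ := (Matrix.exists_mulVec_eq_zero_iff).mpr hdet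
  obtain ⟨i, hvi, hsign⟩ := hP0 v hv
  have h0 : s i * v i + t i * M.mulVec v i = 0 := by
    have := congrFun hker i
    simpa [Matrix.add_mulVec, Matrix.mulVec_diagonal, ← Matrix.mulVec_mulVec,
      Matrix.mulVec_diagonal] using this
  have hvv : 0 < v i * v i := mul_self_pos.mpr hvi
  have hts : 0 ≤ t i * (v i * M.mulVec v i) := mul_nonneg (ht i) hsign
  have := hs i
  nlinarith [mul_self_nonneg (v i), congrArg (· * v i) h0]
end

section
/- Let F : ℝⁿ → ℝⁿ be continuously differentiable and a P₀-function, so ∇F(x) is a P₀-matrix for each x. For r > 0 and (x,z) ∈ ℝ²ⁿ, let D_a = diag(((z_i+r)/(x_i+z_i+2r))²) and D_b = diag(((x_i+r)/(x_i+z_i+2r))²), where x, z > 0. Then the block matrix [[∇F(x), −I],[D_a, D_b]] is nonsingular. -/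
open Matrix

/-- The Jacobian matrix of F : ℝⁿ → ℝⁿ at x. -/
noncomputable def jacobianMatrix (n : ℕ) (F : (Fin n → ℝ) → (Fin n → ℝ))
    (x : Fin n → ℝ) : Matrix (Fin n) (Fin n) ℝ :=
  Matrix.of fun i j => fderiv ℝ F x (Pi.single j 1) i

/-- Let F be a C¹ P₀-function (its Jacobian is everywhere a P₀-matrix). For r > 0
and x, z > 0, with D_a = diag(((zᵢ+r)/(xᵢ+zᵢ+2r))²), D_b = diag(((xᵢ+r)/(xᵢ+zᵢ+2r))²),
the block matrix [[∇F(x), −I],[D_a, D_b]] is nonsingular. -/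
theorem stmt_12 (n : ℕ) (F : (Fin n → ℝ) → (Fin n → ℝ))
    (hF : ContDiff ℝ 1 F)
    (hP0 : ∀ y : Fin n → ℝ, ∀ v : Fin n → ℝ, v ≠ 0 →
      ∃ i, v i ≠ 0 ∧ 0 ≤ v i * (jacobianMatrix n F y).mulVec v i)
    (r : ℝ) (hr : 0 < r) (x z : Fin n → ℝ) (hx : ∀ i, 0 < x i) (hz : ∀ i, 0 < z i) :
    (Matrix.fromBlocks (jacobianMatrix n F x) (-1)
      (Matrix.diagonal fun i => ((z i + r) / (x i + z i + 2 * r)) ^ 2)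
      (Matrix.diagonal fun i => ((x i + r) / (x i + z i + 2 * r)) ^ 2)).det ≠ 0 := by
  intro hdet
  obtain ⟨w, hw, hw0⟩ := Matrix.exists_mulVec_eq_zero_iff.mpr hdet
  set A := jacobianMatrix n F x with hA
  set u : Fin n → ℝ := w ∘ Sum.inl with hu'
  set v : Fin n → ℝ := w ∘ Sum.inr with hv'
  have hwe : w = Sum.elim u v := (Sum.elim_comp_inl_inr w).symm
  rw [hwe, Matrix.fromBlocks_mulVec] at hw0
  have h1 : A *ᵥ u + (-1 : Matrix (Fin n) (Fin n) ℝ) *ᵥ v = 0 :=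
    funext fun i => congrFun hw0 (Sum.inl i)
  have h2 : (Matrix.diagonal fun i => ((z i + r) / (x i + z i + 2 * r)) ^ 2) *ᵥ u
      + (Matrix.diagonal fun i => ((x i + r) / (x i + z i + 2 * r)) ^ 2) *ᵥ v = 0 :=
    funext fun i => congrFun hw0 (Sum.inr i)
  rw [Matrix.neg_mulVec, Matrix.one_mulVec, add_neg_eq_zero] at h1
  have hu : u ≠ 0 := by
    intro h
    apply hw
    have hv0 : v = 0 := by rw [← h1, h, Matrix.mulVec_zero]
    rw [hwe, h, hv0]
    ext (i | i) <;> simp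
  obtain ⟨i, hui, hprod⟩ := hP0 x u hu
  have h2i := congrFun h2 i
  simp only [Pi.add_apply, Matrix.mulVec_diagonal, Pi.zero_apply] at h2i
  have ha : 0 < ((z i + r) / (x i + z i + 2 * r)) ^ 2 :=
    pow_pos (div_pos (by linarith [hz i]) (by linarith [hx i, hz i])) 2
  have hb : 0 < ((x i + r) / (x i + z i + 2 * r)) ^ 2 :=
    pow_pos (div_pos (by linarith [hx i]) (by linarith [hx i, hz i])) 2
  have hvi : v i = (A *ᵥ u) i := by rw [h1]
  rw [hvi] at h2i
  have hprod' : 0 ≤ u i * (A *ᵥ u) i := hprod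
  have hkey : ((z i + r) / (x i + z i + 2 * r)) ^ 2 * (u i * u i)
      + ((x i + r) / (x i + z i + 2 * r)) ^ 2 * (u i * (A *ᵥ u) i) = 0 := by
    linear_combination u i * h2i
  linarith [mul_pos ha (mul_self_pos.mpr hui), mul_nonneg hb.le hprod']
end
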